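/- arXiv:1408.0477 — 8 statements merged into one kernel-verified Lean document; each statement's English description precedes it below -/
import Mathlib

section
/- For all nonnegative integers n and j with j ≥ 1, the Legendre-Stirling number of the second kind satisfies the explicit formula {n brace j}_1 = Σ_{r=0}^{j} (-1)^{r+j} (2r+1)(r(r+1))^n / ((j-r)! (j+r+1)!). -/
noncomputable def LS : ℕ → ℕ → ℝ
  | 0, 0 => 1
  | 0, _ + 1 => 0
  | _ + 1, 0 => 0
  | n + 1, j + 1 => LS n j + ((j:ℝ) + 1) * ((j:ℝ) + 2) * LS n (j + 1)

/-!
Since `r(r+1) - (j+1)(j+2) = -(j+1-r)(j+r+2)`, multiplying the `r`-th summand for `j + 1`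
by this factor
cancels one factor of each factorial and flips the sign, giving the summand for `j`.
Hence the sums satisfy the defining recurrence of `LS` in `n`, and it remains to check
the case `n = 0`, where for `j ≥ 1` the sum `∑ (-1)^r (2r+1) / ((j-r)! (j+r+1)!)` vanishes
because its partial sums telescope.
-/

open Finset

noncomputable def lsTerm (n j r : ℕ) : ℝ :=
  (-1 : ℝ) ^ (r + j) * (2 * r + 1) * ((r : ℝ) * (r + 1)) ^ n /
    ((Nat.factorial (j - r)) * (Nat.factorial (j + r + 1)))

lemma lsTerm_succ_left (n j r : ℕ) : lsTerm (n + 1) j r = r * (r + 1) * lsTerm n j r := by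
  unfold lsTerm
  ring

lemma sub_mul_lsTerm_succ {n j r : ℕ} (h : r ≤ j) :
    ((r : ℝ) * (r + 1) - (j + 1) * (j + 2)) * lsTerm n (j + 1) r = lsTerm n j r := by
  have hfac₁ : Nat.factorial (j + 1 - r) = (j - r + 1) * Nat.factorial (j - r) := by
    rw [show j + 1 - r = j - r + 1 by omega, Nat.factorial_succ]
  have hfac₂ : Nat.factorial (j + 1 + r + 1) = (j + r + 2) * Nat.factorial (j + r + 1) := by
    rw [show j + 1 + r + 1 = j + r + 1 + 1 by omega, Nat.factorial_succ]
  have hjr : (r : ℝ) ≤ j := by exact_mod_cast h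
  have : (j : ℝ) - r + 1 ≠ 0 := by linarith
  have := (j - r).factorial_ne_zero
  have := (j + r + 1).factorial_ne_zero
  unfold lsTerm
  rw [hfac₁, hfac₂, show r + (j + 1) = r + j + 1 by omega, pow_succ]
  push_cast [Nat.cast_sub h]
  field_simp
  ring

lemma sum_range_lsTerm_succ (n j : ℕ) :
    ∑ r ∈ range (j + 2), lsTerm (n + 1) (j + 1) r =
      (j + 1) * (j + 2) * ∑ r ∈ range (j + 2), lsTerm n (j + 1) r +
        ∑ r ∈ range (j + 1), lsTerm n j r := by
  have hlow : ∑ r ∈ range (j + 2), ((r : ℝ) * (r + 1) - (j + 1) * (j + 2)) * lsTerm n (j + 1) r =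
      ∑ r ∈ range (j + 1), lsTerm n j r := by
    rw [sum_range_succ]
    rw [show ((j + 1 : ℕ) : ℝ) * ((j + 1 : ℕ) + 1) - (j + 1) * (j + 2) = 0 by push_cast; ring,
      zero_mul, add_zero]
    exact sum_congr rfl fun r hr => sub_mul_lsTerm_succ (Nat.lt_succ_iff.mp (mem_range.mp hr))
  rw [← hlow, mul_sum, ← sum_add_distrib]
  refine sum_congr rfl fun r _ => ?_
  rw [lsTerm_succ_left]
  ring

lemma mul_sum_range_lsTerm_zero {j m : ℕ} (hm : m ≤ j) :
    (j : ℝ) * ∑ r ∈ range (m + 1), lsTerm 0 j r =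
      (-1 : ℝ) ^ (m + j) * (m + 1) * ((j : ℝ) - m) /
        ((Nat.factorial (j - m)) * (Nat.factorial (j + m + 1))) := by
  induction m with
  | zero =>
    simp only [lsTerm, zero_add, sum_range_one, Nat.sub_zero, pow_zero, Nat.cast_zero]
    field_simp
    ring
  | succ m ih =>
    rw [sum_range_succ, mul_add, ih (by omega)]
    have hfac₁ : Nat.factorial (j - m) = (j - m) * Nat.factorial (j - (m + 1)) := by
      rw [show j - m = j - (m + 1) + 1 by omega, Nat.factorial_succ]
    have hfac₂ : Nat.factorial (j + (m + 1) + 1) = (j + m + 2) * Nat.factorial (j + m + 1) := by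
      rw [show j + (m + 1) + 1 = j + m + 1 + 1 by omega, Nat.factorial_succ]
    have hmj : (m : ℝ) + 1 ≤ j := by exact_mod_cast hm
    have : (j : ℝ) - m ≠ 0 := by linarith
    have := (j - (m + 1)).factorial_ne_zero
    have := (j + m + 1).factorial_ne_zero
    unfold lsTerm
    rw [hfac₁, hfac₂, show m + 1 + j = m + j + 1 by omega, pow_succ]
    push_cast [Nat.cast_sub (show m ≤ j by omega), Nat.cast_sub hm]
    field_simp
    ring

lemma sum_range_lsTerm_zero {j : ℕ} (hj : j ≠ 0) : ∑ r ∈ range (j + 1), lsTerm 0 j r = 0 := by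
  have h := mul_sum_range_lsTerm_zero (le_refl j)
  rw [sub_self, mul_zero, zero_div] at h
  exact (mul_eq_zero.mp h).resolve_left (by exact_mod_cast hj)

lemma LS_eq_sum_range_lsTerm (n j : ℕ) : LS n j = ∑ r ∈ range (j + 1), lsTerm n j r := by
  induction n generalizing j with
  | zero =>
    cases j with
    | zero => simp [LS, lsTerm]
    | succ j => rw [sum_range_lsTerm_zero j.succ_ne_zero]; rfl
  | succ n ih =>
    cases j with
    | zero => simp [LS, lsTerm]
    | succ j =>
      rw [sum_range_lsTerm_succ, ← ih, ← ih, LS]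
      ring

theorem ls_explicit_general (n j : ℕ) :
    LS n j = ∑ r ∈ Finset.range (j + 1),
      (-1 : ℝ) ^ (r + j) * (2 * r + 1) * ((r : ℝ) * (r + 1)) ^ n /
        ((Nat.factorial (j - r)) * (Nat.factorial (j + r + 1))) :=
  LS_eq_sum_range_lsTerm n j

theorem ls_explicit (n j : ℕ) (hj : 1 ≤ j) :
    LS n j = ∑ r ∈ Finset.range (j + 1),
      (-1 : ℝ) ^ (r + j) * (2 * r + 1) * ((r : ℝ) * (r + 1)) ^ n /
        ((Nat.factorial (j - r)) * (Nat.factorial (j + r + 1))) :=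
  ls_explicit_general n j
end

section
/- For all nonnegative integers n and j, the Legendre-Stirling number of the second kind satisfies {n brace j}_1 = (1/(2j)!) Σ_{ν=0}^{2j} (-1)^ν C(2j,ν) ((j-ν)(j+1-ν))^n. -/
open Finset

theorem sum_range_neg_one_pow_mul_choose_eq_zero_of_symm {R : Type*} [CommRing R]
    [IsAddTorsionFree R] {m : ℕ} (hm : Odd m) (f : ℕ → R)
    (hf : ∀ μ ≤ m, f (m - μ) = f μ) :
    ∑ μ ∈ range (m + 1), (-1 : R) ^ μ * m.choose μ * f μ = 0 := by
  rw [← self_eq_neg, ← sum_neg_distrib]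
  nth_rewrite 1 [← sum_range_reflect]
  refine sum_congr rfl fun μ hμ => ?_
  have hμm : μ ≤ m := Nat.lt_succ_iff.mp (mem_range.mp hμ)
  have hsign : (-1 : R) ^ (m - μ) * (-1) ^ μ = -1 := by
    rw [← pow_add, Nat.sub_add_cancel hμm, hm.neg_one_pow]
  have hsq : (-1 : R) ^ μ * (-1) ^ μ = 1 := by rw [← mul_pow]; simp
  rw [Nat.add_sub_cancel, Nat.choose_symm hμm, hf μ hμm]
  linear_combination (m.choose μ * f μ) * ((-1) ^ μ * hsign - (-1) ^ (m - μ) * hsq)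

theorem add_one_mul_sub_mul_choose {R : Type*} [CommRing R] {m μ : ℕ} (hμ : μ ≤ m + 1) :
    ((μ : R) + 1) * ((m : R) + 2 - μ) * (m + 2).choose (μ + 1) =
      ((m : R) + 1) * (m + 2) * m.choose μ + ((m : R) + 2) * (m + 1).choose μ := by
  have h₁ := congrArg (Nat.cast : ℕ → R) (Nat.add_one_mul_choose_eq (m + 1) μ)
  have h₂ := congrArg (Nat.cast : ℕ → R) (Nat.choose_mul_succ_eq m μ)
  push_cast [Nat.cast_sub hμ] at h₁ h₂
  linear_combination ((μ : R) - m - 2) * h₁ - ((m : R) + 2) * h₂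

noncomputable def lsAltSum (n j : ℕ) : ℝ :=
  ∑ ν ∈ range (2 * j + 1),
    (-1 : ℝ) ^ ν * (Nat.choose (2 * j) ν) * (((j : ℝ) - ν) * ((j : ℝ) + 1 - ν)) ^ n

theorem lsAltSum_zero_succ (j : ℕ) : lsAltSum 0 (j + 1) = 0 := by
  have h := Int.alternating_sum_range_choose_of_ne (n := 2 * (j + 1)) (by omega)
  simpa [lsAltSum] using congrArg (Int.cast : ℤ → ℝ) h

theorem lsAltSum_succ_zero (n : ℕ) : lsAltSum (n + 1) 0 = 0 := by
  simp [lsAltSum]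

theorem lsAltSum_succ_succ (n j : ℕ) :
    lsAltSum (n + 1) (j + 1) =
      (2 * (j : ℝ) + 1) * (2 * j + 2) * lsAltSum n j +
        ((j : ℝ) + 1) * (j + 2) * lsAltSum n (j + 1) := by
  set t : ℕ → ℝ := fun ν => ((j : ℝ) - ν) * ((j : ℝ) + 1 - ν)
  set t' : ℕ → ℝ := fun ν => ((j : ℝ) + 1 - ν) * ((j : ℝ) + 1 + 1 - ν)
  set c : ℕ → ℝ := fun ν => (-1 : ℝ) ^ ν * (2 * j + 2).choose ν
  have hsplit : lsAltSum (n + 1) (j + 1) = ((j : ℝ) + 1) * (j + 2) * lsAltSum n (j + 1) +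
      ∑ ν ∈ range (2 * j + 2 + 1), c ν * (t' ν - t' 0) * t' ν ^ n := by
    rw [lsAltSum, lsAltSum, mul_sum, Nat.mul_succ, ← sum_add_distrib]
    refine sum_congr rfl fun ν _ => ?_
    simp only [c, t']
    push_cast
    ring
  have hshift : ∀ μ ∈ range (2 * j + 2), c (μ + 1) * (t' (μ + 1) - t' 0) * t' (μ + 1) ^ n =
      (2 * (j : ℝ) + 1) * (2 * j + 2) * ((-1) ^ μ * (2 * j).choose μ * t μ ^ n) +
        (2 * (j : ℝ) + 2) * ((-1) ^ μ * (2 * j + 1).choose μ * t μ ^ n) := by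
    intro μ hμ
    have hcoeff := add_one_mul_sub_mul_choose (R := ℝ) (m := 2 * j) (μ := μ)
      (Nat.lt_succ_iff.mp (mem_range.mp hμ))
    simp only [c, t, t']
    push_cast at hcoeff ⊢
    linear_combination (-1) ^ μ * (((j : ℝ) - μ) * ((j : ℝ) + 1 - μ)) ^ n * hcoeff
  have hsymm :
      ∑ μ ∈ range (2 * j + 1 + 1), (-1 : ℝ) ^ μ * (2 * j + 1).choose μ * t μ ^ n = 0 := by
    refine sum_range_neg_one_pow_mul_choose_eq_zero_of_symm (odd_two_mul_add_one j) _
      fun μ hμ => ?_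
    simp only [t]
    push_cast [Nat.cast_sub hμ]
    ring
  have htop : ∑ μ ∈ range (2 * j + 1 + 1), (-1 : ℝ) ^ μ * (2 * j).choose μ * t μ ^ n =
      lsAltSum n j := by
    rw [sum_range_succ, Nat.choose_succ_self]
    simp [lsAltSum, t]
  rw [hsplit, sum_range_succ', sum_congr rfl hshift, sum_add_distrib, ← mul_sum, ← mul_sum,
    hsymm, htop, sub_self]
  ring

theorem factorial_mul_LS (n j : ℕ) : ((2 * j).factorial : ℝ) * LS n j = lsAltSum n j := by
  induction n generalizing j with
  | zero =>
    cases j with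
    | zero => simp [LS, lsAltSum]
    | succ j => simp [LS, lsAltSum_zero_succ]
  | succ n ih =>
    cases j with
    | zero => simp [LS, lsAltSum_succ_zero]
    | succ j =>
      have hfac :
          ((2 * (j + 1)).factorial : ℝ) = (2 * j + 2) * (2 * j + 1) * (2 * j).factorial := by
        rw [show 2 * (j + 1) = 2 * j + 1 + 1 by ring, Nat.factorial_succ, Nat.factorial_succ]
        push_cast; ring
      rw [lsAltSum_succ_succ, ← ih, ← ih, LS, hfac]
      ring

theorem ls_single_sum (n j : ℕ) :
    LS n j = (1 / (Nat.factorial (2 * j) : ℝ)) *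
      ∑ ν ∈ Finset.range (2 * j + 1),
        (-1 : ℝ) ^ ν * (Nat.choose (2 * j) ν) *
          (((j : ℝ) - ν) * ((j : ℝ) + 1 - ν)) ^ n := by
  rw [← lsAltSum, ← factorial_mul_LS, ← mul_assoc, one_div_mul_cancel (by positivity),
    one_mul]
end

section
/- For all nonnegative integers k and j, the Legendre-Stirling numbers with odd first index satisfy {2k+1 brace j}_1 = Σ_{μ=0}^{k} C(2k+1, 2μ+1) {k+μ+1 brace j}_{1/2}. -/
noncomputable def CS : ℕ → ℕ → ℝ
  | 0, 0 => 1
  | 0, _ + 1 => 0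
  | _ + 1, 0 => 0
  | n + 1, j + 1 => CS n j + ((j:ℝ) + 1) ^ 2 * CS n (j + 1)

open Finset

noncomputable def csConv (c : ℕ → ℝ) (n j : ℕ) : ℝ :=
  ∑ x ∈ antidiagonal n, c x.2 * CS x.1 j

lemma csConv_zero_right (c : ℕ → ℝ) (n : ℕ) : csConv c n 0 = c n := by
  cases n with
  | zero => simp [csConv, CS]
  | succ n => simp [csConv, Nat.sum_antidiagonal_succ, CS]

lemma csConv_succ_succ (c : ℕ → ℝ) (n j : ℕ) :
    csConv c (n + 1) (j + 1) = csConv c n j + ((j : ℝ) + 1) ^ 2 * csConv c n (j + 1) := by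
  simp only [csConv, Nat.sum_antidiagonal_succ, CS, mul_zero, zero_add, mul_sum,
    ← sum_add_distrib]
  exact sum_congr rfl fun _ _ => by ring

lemma csConv_choose_even_succ (n m j : ℕ) :
    csConv (fun q => ((n + 1).choose (2 * q) : ℝ)) (m + 1) j =
      csConv (fun q => (n.choose (2 * q) : ℝ)) (m + 1) j +
        csConv (fun q => (n.choose (2 * q + 1) : ℝ)) m j := by
  simp only [csConv, Nat.sum_antidiagonal_succ', mul_zero, Nat.choose_zero_right,
    show ∀ q, 2 * (q + 1) = 2 * q + 1 + 1 from fun q => by ring, Nat.choose_succ_succ',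
    Nat.cast_add, add_mul, sum_add_distrib]
  ring

lemma csConv_choose_odd_succ (n m j : ℕ) :
    csConv (fun q => ((n + 1).choose (2 * q + 1) : ℝ)) m j =
      csConv (fun q => (n.choose (2 * q) : ℝ)) m j +
        csConv (fun q => (n.choose (2 * q + 1) : ℝ)) m j := by
  simp only [csConv, Nat.choose_succ_succ', Nat.cast_add, add_mul, sum_add_distrib]

theorem csConv_choose_eq_LS (n j : ℕ) :
    csConv (fun q => (n.choose (2 * q) : ℝ)) n j = LS n j ∧
      csConv (fun q => (n.choose (2 * q + 1) : ℝ)) n j = j * LS n j := by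
  induction n generalizing j with
  | zero => cases j <;> simp [csConv, LS, CS]
  | succ n ih =>
    cases j with
    | zero =>
      have hEven : (n + 1).choose (2 * (n + 1)) = 0 := Nat.choose_eq_zero_of_lt (by omega)
      have hOdd : (n + 1).choose (2 * (n + 1) + 1) = 0 := Nat.choose_eq_zero_of_lt (by omega)
      simp [csConv_zero_right, LS, hEven, hOdd]
    | succ j =>
      obtain ⟨hEven, hOdd⟩ := ih j
      obtain ⟨hEven', hOdd'⟩ := ih (j + 1)
      rw [csConv_choose_even_succ, csConv_choose_odd_succ, csConv_succ_succ, csConv_succ_succ,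
        hEven, hOdd, hEven', hOdd', LS]
      push_cast
      constructor <;> ring

lemma sum_antidiagonal_choose_two_mul_odd (k : ℕ) (g : ℕ → ℝ) :
    ∑ x ∈ antidiagonal (2 * k + 1), ((2 * k + 1).choose (2 * x.2) : ℝ) * g x.1 =
      ∑ μ ∈ range (k + 1), ((2 * k + 1).choose (2 * μ + 1) : ℝ) * g (k + μ + 1) := by
  rw [Nat.sum_antidiagonal_eq_sum_range_succ (fun p q => ((2 * k + 1).choose (2 * q) : ℝ) * g p),
    show (2 * k + 1).succ = (k + 1) + (k + 1) by omega, sum_range_add]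
  have hLow : ∀ p ∈ range (k + 1), ((2 * k + 1).choose (2 * (2 * k + 1 - p)) : ℝ) * g p = 0 :=
    fun p hp => by
      rw [Nat.choose_eq_zero_of_lt (by have := mem_range.mp hp; omega), Nat.cast_zero, zero_mul]
  rw [sum_eq_zero hLow, zero_add]
  refine sum_congr rfl fun μ hμ => ?_
  have hμ : μ ≤ k := Nat.lt_succ_iff.mp (mem_range.mp hμ)
  have hSymm : 2 * k + 1 = 2 * (2 * k + 1 - (k + 1 + μ)) + (2 * μ + 1) := by omega
  rw [Nat.choose_symm_of_eq_add hSymm, show k + 1 + μ = k + μ + 1 by omega]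

theorem ls_odd_connection (k j : ℕ) :
    LS (2 * k + 1) j =
      ∑ μ ∈ Finset.range (k + 1),
        (Nat.choose (2 * k + 1) (2 * μ + 1) : ℝ) * CS (k + μ + 1) j := by
  rw [← (csConv_choose_eq_LS (2 * k + 1) j).1, csConv]
  exact sum_antidiagonal_choose_two_mul_odd k (CS · j)
end

section
/- For all nonnegative integers k and j, the Legendre-Stirling numbers with even first index satisfy {2k brace j}_1 = Σ_{μ=0}^{k} C(2k, 2μ) {k+μ brace j}_{1/2}. -/
open Finset Finset.Nat

section Antidiagonal

variable {M : Type*} [AddCommMonoid M]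

theorem sum_antidiagonal_choose_two_mul_succ (n : ℕ) (g : ℕ → M) :
    ∑ x ∈ antidiagonal (n + 1), (n + 1).choose (2 * x.1) • g x.2 =
      ∑ x ∈ antidiagonal n, n.choose (2 * x.1) • g (x.2 + 1) +
        ∑ x ∈ antidiagonal n, n.choose (2 * x.1 + 1) • g x.2 := by
  have shifted : ∑ x ∈ antidiagonal n, n.choose (2 * x.1) • g (x.2 + 1) =
      g (n + 1) + ∑ x ∈ antidiagonal n, n.choose (2 * x.1 + 2) • g x.2 := by
    have h := (sum_antidiagonal_succ' (n := n)
      (f := fun x => n.choose (2 * x.1) • g x.2)).symm.trans sum_antidiagonal_succ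
    simpa only [mul_add, mul_one, Nat.choose_eq_zero_of_lt (show n < 2 * n + 2 by omega),
      zero_nsmul, zero_add, mul_zero, Nat.choose_zero_right, one_smul] using h
  rw [sum_antidiagonal_succ, shifted, add_assoc, ← sum_add_distrib]
  congr 1
  · simp
  · refine sum_congr rfl fun x _ => ?_
    rw [mul_add, Nat.choose_succ_succ', add_smul, add_comm]

theorem sum_antidiagonal_choose_two_mul_add_one_succ (n : ℕ) (g : ℕ → M) :
    ∑ x ∈ antidiagonal (n + 1), (n + 1).choose (2 * x.1 + 1) • g x.2 =
      ∑ x ∈ antidiagonal n, n.choose (2 * x.1) • g (x.2 + 1) +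
        ∑ x ∈ antidiagonal n, n.choose (2 * x.1 + 1) • g (x.2 + 1) := by
  rw [sum_antidiagonal_succ', Nat.choose_eq_zero_of_lt (by omega), zero_smul, zero_add,
    ← sum_add_distrib]
  simp only [Nat.choose_succ_succ', add_smul]

theorem sum_antidiagonal_two_mul_eq_sum_range (k : ℕ) (f : ℕ → M) :
    ∑ x ∈ antidiagonal (2 * k), (2 * k).choose (2 * x.1) • f x.2 =
      ∑ μ ∈ range (k + 1), (2 * k).choose (2 * μ) • f (k + μ) := by
  rw [← sum_antidiagonal_swap]
  simp only [Prod.fst_swap, Prod.snd_swap]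
  rw [sum_antidiagonal_eq_sum_range_succ (fun m p => (2 * k).choose (2 * p) • f m),
    show (2 * k).succ = k + (k + 1) by omega, sum_range_add]
  have vanish : ∀ m ∈ range k, (2 * k).choose (2 * (2 * k - m)) • f m = 0 := fun m hm => by
    rw [Nat.choose_eq_zero_of_lt (by simp at hm; omega), zero_smul]
  rw [sum_eq_zero vanish, zero_add]
  refine sum_congr rfl fun μ hμ => ?_
  rw [show 2 * (2 * k - (k + μ)) = 2 * k - 2 * μ by omega,
    Nat.choose_symm (by simp at hμ; omega)]

end Antidiagonal

theorem smul_sum_antidiagonal_pow_smul {R M : Type*} [Monoid R] [AddCommMonoid M]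
    [DistribMulAction R M]
    (t : R) (v : M) (n : ℕ) (c : ℕ × ℕ → ℕ) :
    t • ∑ x ∈ antidiagonal n, c x • t ^ x.2 • v =
      ∑ x ∈ antidiagonal n, c x • t ^ (x.2 + 1) • v := by
  simp only [smul_sum, smul_comm t, pow_succ', mul_smul]

theorem add_pow_smul_eq_sum_antidiagonal {R M : Type*} [Ring R] [AddCommGroup M] [Module R M]
    {d t : R} (hdt : d * t - t * d = t - d * d) {v : M} (hv : d • v = 0) (n : ℕ) :
    (t + d) ^ n • v = ∑ x ∈ antidiagonal n, n.choose (2 * x.1) • t ^ x.2 • v ∧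
      d • (t + d) ^ n • v = ∑ x ∈ antidiagonal n, n.choose (2 * x.1 + 1) • t ^ x.2 • v := by
  induction n with
  | zero => simp [hv]
  | succ n ih =>
    obtain ⟨hA, hB⟩ := ih
    have hd : d * (t + d) = t * (1 + d) :=
      calc d * (t + d) = (d * t - t * d) + t * d + d * d := by noncomm_ring
        _ = t * (1 + d) := by rw [hdt]; noncomm_ring
    constructor
    · rw [pow_succ', mul_smul, add_smul, hB, hA, smul_sum_antidiagonal_pow_smul,
        sum_antidiagonal_choose_two_mul_succ n (fun m => t ^ m • v)]
    · rw [pow_succ', mul_smul, smul_smul, hd, mul_one_add, add_smul, mul_smul, hB, hA,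
        smul_sum_antidiagonal_pow_smul, smul_sum_antidiagonal_pow_smul,
        sum_antidiagonal_choose_two_mul_add_one_succ n (fun m => t ^ m • v)]

namespace RealSeq

def shift : Module.End ℝ (ℕ → ℝ) where
  toFun a
    | 0 => 0
    | j + 1 => a j
  map_add' a b := by funext j; cases j <;> simp
  map_smul' c a := by funext j; cases j <;> simp

noncomputable def indexMul : Module.End ℝ (ℕ → ℝ) := LinearMap.mulLeft ℝ fun j => (j : ℝ)

@[simp] theorem shift_apply_zero (a : ℕ → ℝ) : shift a 0 = 0 := rfl
@[simp] theorem shift_apply_succ (a : ℕ → ℝ) (j : ℕ) : shift a (j + 1) = a j := rfl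
@[simp] theorem indexMul_apply (a : ℕ → ℝ) (j : ℕ) : indexMul a j = j * a j := rfl

theorem indexMul_mul_shift_sub : indexMul * shift - shift * indexMul = shift := by
  ext a j
  rcases j with _ | j
  · simp
  · simp only [LinearMap.sub_apply, Module.End.mul_apply, Pi.sub_apply, indexMul_apply,
      shift_apply_succ, Nat.cast_add, Nat.cast_one]
    ring

theorem indexMul_single_zero : indexMul (Pi.single 0 1) = 0 := by
  ext j
  cases j <;> simp

end RealSeq

open RealSeq

theorem CS_zero_eq_single : CS 0 = Pi.single 0 1 := by
  funext j; cases j <;> simp [CS]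

theorem LS_zero_eq_single : LS 0 = Pi.single 0 1 := by
  funext j; cases j <;> simp [LS]

theorem CS_succ_eq (n : ℕ) : CS (n + 1) = (shift + indexMul * indexMul) (CS n) := by
  funext j
  rcases j with _ | j
  · simp [CS]
  · simp only [CS, LinearMap.add_apply, Module.End.mul_apply, Pi.add_apply, shift_apply_succ,
      indexMul_apply, Nat.cast_add, Nat.cast_one]
    ring

theorem LS_succ_eq (n : ℕ) : LS (n + 1) = (shift + indexMul * indexMul + indexMul) (LS n) := by
  funext j
  rcases j with _ | j
  · simp [LS]
  · simp only [LS, LinearMap.add_apply, Module.End.mul_apply, Pi.add_apply, shift_apply_succ,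
      indexMul_apply, Nat.cast_add, Nat.cast_one]
    ring

theorem CS_eq_pow_apply (n : ℕ) : CS n = ((shift + indexMul * indexMul) ^ n) (Pi.single 0 1) := by
  induction n with
  | zero => exact CS_zero_eq_single
  | succ n ih => rw [CS_succ_eq, ih, pow_succ', Module.End.mul_apply]

theorem LS_eq_pow_apply (n : ℕ) :
    LS n = ((shift + indexMul * indexMul + indexMul) ^ n) (Pi.single 0 1) := by
  induction n with
  | zero => exact LS_zero_eq_single
  | succ n ih => rw [LS_succ_eq, ih, pow_succ', Module.End.mul_apply]

theorem LS_eq_sum_antidiagonal (n : ℕ) :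
    LS n = ∑ x ∈ antidiagonal n, n.choose (2 * x.1) • CS x.2 := by
  have hdt : indexMul * (shift + indexMul * indexMul) - (shift + indexMul * indexMul) * indexMul =
      shift + indexMul * indexMul - indexMul * indexMul :=
    calc _ = indexMul * shift - shift * indexMul := by noncomm_ring
      _ = _ := by rw [indexMul_mul_shift_sub]; abel
  simpa only [Module.End.smul_def, ← CS_eq_pow_apply, ← LS_eq_pow_apply] using
    (add_pow_smul_eq_sum_antidiagonal hdt indexMul_single_zero n).1

theorem ls_even_connection (k j : ℕ) :
    LS (2 * k) j =
      ∑ μ ∈ Finset.range (k + 1),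
        (Nat.choose (2 * k) (2 * μ) : ℝ) * CS (k + μ) j := by
  rw [LS_eq_sum_antidiagonal, sum_antidiagonal_two_mul_eq_sum_range]
  simp only [Finset.sum_apply, nsmul_eq_mul, Pi.mul_apply, Pi.natCast_apply]
end

section
/- The generating polynomials M_n(s) := Σ_{j=0}^{n} (2j)! {n brace j}_1 s^j satisfy, for n ≥ 1, the differential-recurrence relation M_n(s) = s (2 M_{n-1}(s) + (10s+2) M_{n-1}'(s) + s(4s+1) M_{n-1}''(s)), with M_0(s) = 1. -/
noncomputable def M (n : ℕ) : Polynomial ℝ :=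
  ∑ j ∈ Finset.range (n + 1),
    Polynomial.C ((Nat.factorial (2 * j) : ℝ) * LS n j) * Polynomial.X ^ j

/-! The operator `p ↦ 2p + (10X+2)p' + X(4X+1)p''` sends `s^j` to
`(2j+1)(2j+2) s^j + j(j+1) s^(j-1)`; multiplied by `X` this is exactly the Legendre–Stirling
recurrence weighted by `(2j)!`, since `(2j+2)! = (2j+1)(2j+2)(2j)!`. -/

open Polynomial

section Operator

variable {R : Type*} [CommRing R]

theorem coeff_X_mul_derivative (p : R[X]) (j : ℕ) :
    (X * derivative p).coeff j = j * p.coeff j := by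
  cases j with
  | zero => simp
  | succ j => rw [coeff_X_mul, coeff_derivative, mul_comm]; push_cast; ring

theorem coeff_X_sq_mul_derivative_derivative (p : R[X]) (j : ℕ) :
    (X ^ 2 * derivative (derivative p)).coeff j = j * (j - 1) * p.coeff j := by
  cases j with
  | zero => simp
  | succ j =>
    rw [pow_two, mul_assoc, coeff_X_mul, coeff_X_mul_derivative, coeff_derivative]
    push_cast; ring

theorem coeff_legendreStirlingOperator (p : R[X]) (j : ℕ) :
    (C 2 * p + (C 10 * X + C 2) * derivative p +
        X * (C 4 * X + C 1) * derivative (derivative p)).coeff j =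
      (2 * j + 1) * (2 * j + 2) * p.coeff j + (j + 1) * (j + 2) * p.coeff (j + 1) := by
  have hsplit : C 2 * p + (C 10 * X + C 2) * derivative p +
      X * (C 4 * X + C 1) * derivative (derivative p) =
      C 2 * p + C 10 * (X * derivative p) + C 2 * derivative p +
        C 4 * (X ^ 2 * derivative (derivative p)) + X * derivative (derivative p) := by
    simp only [C_1]; ring
  rw [hsplit]
  simp only [coeff_add, coeff_C_mul, coeff_X_mul_derivative, coeff_X_sq_mul_derivative_derivative,
    coeff_derivative]
  ring

end Operator

theorem LS_eq_zero_of_lt : ∀ {n k : ℕ}, n < k → LS n k = 0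
  | 0, _ + 1, _ => rfl
  | n + 1, k + 1, h => by
    rw [LS, LS_eq_zero_of_lt (by omega : n < k), LS_eq_zero_of_lt (by omega : n < k + 1)]
    ring

theorem coeff_M (n k : ℕ) : (M n).coeff k = (Nat.factorial (2 * k) : ℝ) * LS n k := by
  rw [M, finsetSum_coeff]
  simp only [coeff_C_mul, coeff_X_pow, mul_ite, mul_one, mul_zero, Finset.sum_ite_eq,
    Finset.mem_range]
  split_ifs with hk
  · rfl
  · rw [LS_eq_zero_of_lt (by omega), mul_zero]

theorem cast_factorial_two_mul_succ (j : ℕ) :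
    ((2 * (j + 1)).factorial : ℝ) = (2 * j + 1) * (2 * j + 2) * (2 * j).factorial := by
  rw [show 2 * (j + 1) = 2 * j + 1 + 1 by ring, Nat.factorial_succ, Nat.factorial_succ]
  push_cast; ring

theorem coeff_M_succ_succ (n j : ℕ) :
    (M (n + 1)).coeff (j + 1) =
      (2 * j + 1) * (2 * j + 2) * (M n).coeff j + (j + 1) * (j + 2) * (M n).coeff (j + 1) := by
  rw [coeff_M, coeff_M, coeff_M, LS, cast_factorial_two_mul_succ]
  ring

theorem M_succ (n : ℕ) :
    M (n + 1) = X * (C 2 * M n + (C 10 * X + C 2) * derivative (M n) +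
      X * (C 4 * X + C 1) * derivative (derivative (M n))) := by
  ext k
  cases k with
  | zero => rw [coeff_X_mul_zero, coeff_M, LS, mul_zero]
  | succ j => rw [coeff_X_mul, coeff_legendreStirlingOperator, coeff_M_succ_succ]

theorem M_recurrence :
    M 0 = 1 ∧
    ∀ n : ℕ, 1 ≤ n →
      M n = Polynomial.X *
        (Polynomial.C 2 * M (n - 1) +
          (Polynomial.C 10 * Polynomial.X + Polynomial.C 2) *
            Polynomial.derivative (M (n - 1)) +
          Polynomial.X * (Polynomial.C 4 * Polynomial.X + Polynomial.C 1) *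
            Polynomial.derivative (Polynomial.derivative (M (n - 1)))) := by
  refine ⟨by simp [M, LS], fun n hn => ?_⟩
  obtain ⟨m, rfl⟩ : ∃ m, n = m + 1 := ⟨n - 1, by omega⟩
  exact M_succ m
end

section
/- For every n ≥ 3, the finite sequence ((2j)! {n brace j}_1)_{0 ≤ j ≤ n} is unimodal, i.e., there exists an index m such that the sequence is nondecreasing for j ≤ m and nonincreasing for j ≥ m. -/
noncomputable def Bf (n j : ℕ) : ℝ := (Nat.factorial (2 * j) : ℝ) * LS n j

lemma ls_nonneg : ∀ n j, 0 ≤ LS n j := by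
  intro n
  induction n with
  | zero => intro j; cases j <;> simp [LS]
  | succ n ih =>
      intro j
      cases j with
      | zero => simp [LS]
      | succ j =>
          have h1 := ih j
          have h2 := ih (j + 1)
          have hc : (0:ℝ) ≤ ((j:ℝ) + 1) * ((j:ℝ) + 2) := by positivity
          simp only [LS]
          nlinarith [mul_nonneg hc h2]

lemma ls_eq_zero : ∀ n j, n < j → LS n j = 0 := by
  intro n
  induction n with
  | zero =>
      intro j hj
      cases j with
      | zero => omega
      | succ j => simp [LS]
  | succ n ih =>
      intro j hj
      cases j with
      | zero => omega
      | succ j =>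
          simp only [LS]
          rw [ih j (by omega), ih (j+1) (by omega)]
          ring

lemma ls_rec (n j : ℕ) :
    LS (n+1) (j+1) = LS n j + ((j:ℝ) + 1) * ((j:ℝ) + 2) * LS n (j+1) := rfl

lemma ls_pos : ∀ n j, 1 ≤ j → j ≤ n → 0 < LS n j := by
  intro n
  induction n with
  | zero => intro j h1 h2; omega
  | succ n ih =>
      intro j h1 h2
      cases j with
      | zero => omega
      | succ k =>
          rw [ls_rec]
          cases k with
          | zero =>
              cases n with
              | zero => norm_num [LS]
              | succ m =>
                  have h2 := ls_nonneg (m+1) 0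
                  have h3 := ih 1 (by omega) (by omega)
                  push_cast
                  nlinarith
          | succ k =>
              have h3 := ih (k+1) (by omega) (by omega)
              have h4 := ls_nonneg n (k+2)
              have hc : (0:ℝ) ≤ ((k:ℝ) + 1 + 1) * ((k:ℝ) + 1 + 2) := by positivity
              push_cast
              nlinarith [mul_nonneg hc h4]

lemma Bf_nonneg (n j : ℕ) : 0 ≤ Bf n j := by
  have := ls_nonneg n j
  unfold Bf; positivity

lemma Bf_pos (n j : ℕ) (h1 : 1 ≤ j) (h2 : j ≤ n) : 0 < Bf n j := by
  have := ls_pos n j h1 h2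
  have hf : (0:ℝ) < (Nat.factorial (2 * j) : ℝ) := by positivity
  exact mul_pos hf this

lemma Bf_eq_zero (n j : ℕ) (h : n < j) : Bf n j = 0 := by
  unfold Bf; rw [ls_eq_zero n j h]; ring

lemma Bf_rec (n j : ℕ) :
    Bf (n + 1) (j + 1) =
      ((2*(j:ℝ)+2) * (2*(j:ℝ)+1)) * Bf n j + (((j:ℝ)+1) * ((j:ℝ)+2)) * Bf n (j+1) := by
  unfold Bf
  have hfac : Nat.factorial (2 * (j+1)) = (2*j+2) * ((2*j+1) * Nat.factorial (2*j)) := by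
    have : 2 * (j+1) = (2*j+1) + 1 := by ring
    rw [this, Nat.factorial_succ, Nat.factorial_succ]
  rw [hfac]
  simp only [LS]
  push_cast
  ring

lemma Bf_chain (n j : ℕ)
    (hlc : ∀ k, Bf n k * Bf n (k+2) ≤ Bf n (k+1) ^ 2) :
    Bf n j * Bf n (j+3) ≤ Bf n (j+1) * Bf n (j+2) := by
  by_cases h : j + 2 ≤ n
  · have hy : 0 < Bf n (j+1) := Bf_pos n (j+1) (by omega) (by omega)
    have hz : 0 < Bf n (j+2) := Bf_pos n (j+2) (by omega) (by omega)
    have h1 := hlc j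
    have h2 := hlc (j+1)
    have ha := Bf_nonneg n j
    have hd := Bf_nonneg n (j+3)
    have hprod : (Bf n j * Bf n (j+2)) * (Bf n (j+1) * Bf n (j+3)) ≤
        Bf n (j+1) ^ 2 * Bf n (j+2) ^ 2 := by
      have : j + 1 + 2 = j + 3 := by omega
      rw [this] at h2
      exact mul_le_mul h1 h2 (by positivity) (by positivity)
    nlinarith [mul_pos hy hz, mul_nonneg ha hd]
  · have : Bf n (j+3) = 0 := Bf_eq_zero n (j+3) (by omega)
    rw [this]
    have := mul_nonneg (Bf_nonneg n (j+1)) (Bf_nonneg n (j+2))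
    nlinarith [Bf_nonneg n j]

lemma Bf_logconcave : ∀ n j, Bf n j * Bf n (j+2) ≤ Bf n (j+1) ^ 2 := by
  intro n
  induction n with
  | zero =>
      intro j
      cases j with
      | zero =>
          have h2 : Bf 0 2 = 0 := Bf_eq_zero 0 2 (by omega)
          rw [h2]
          nlinarith [sq_nonneg (Bf 0 1)]
      | succ j =>
          have h0 : Bf 0 (j+1) = 0 := Bf_eq_zero 0 (j+1) (by omega)
          rw [h0]
          nlinarith [sq_nonneg (Bf 0 (j+2))]
  | succ n ih =>
      intro j
      cases j with
      | zero =>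
          have h0 : Bf (n+1) 0 = 0 := by
            unfold Bf
            have : LS (n+1) 0 = 0 := by simp [LS]
            rw [this]; ring
          rw [h0]
          nlinarith [sq_nonneg (Bf (n+1) 1)]
      | succ k =>
          -- indices k+1, k+2, k+3
          rw [show k + 1 + 2 = (k+2) + 1 from by omega, show k + 1 + 1 = (k+1) + 1 from rfl]
          rw [Bf_rec n k, Bf_rec n (k+1), Bf_rec n (k+2)]
          set x : ℝ := (k : ℝ) with hx
          have hx0 : (0:ℝ) ≤ x := by positivity
          set a := Bf n k
          set b := Bf n (k+1)
          set c := Bf n (k+2)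
          set d := Bf n (k+3)
          have hb : 0 ≤ b := Bf_nonneg n (k+1)
          have hc : 0 ≤ c := Bf_nonneg n (k+2)
          have h1 : a * c ≤ b ^ 2 := ih k
          have h2 : b * d ≤ c ^ 2 := by
            have := ih (k+1)
            rw [show k + 1 + 2 = k + 3 from by omega] at this
            exact this
          have h3 : a * d ≤ b * c := by
            have := Bf_chain n k ih
            exact this
          have hcast1 : ((k:ℝ) + 1) = x + 1 := by rw [hx]
          have hcast2 : ((k:ℝ) + 1 + 1) = x + 2 := by rw [hx]; ring
          have hcast3 : ((k:ℝ) + 2 + 1) = x + 3 := by push_cast [hx]; ring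
          have e1 : 0 ≤ (32*x^2 + 112*x + 84) * b^2 := by positivity
          have e2 : 0 ≤ ((x+3) * (16*x + 20)) * (b*c) :=
            mul_nonneg (by positivity) (mul_nonneg hb hc)
          have e3 : 0 ≤ (2*(x+2)*(x+3)) * c^2 := by positivity
          have e4 : 0 ≤ ((2*x+2)*(2*x+1)*(2*x+6)*(2*x+5)) * (b^2 - a*c) :=
            mul_nonneg (by positivity) (by linarith)
          have e5 : 0 ≤ ((2*x+2)*(2*x+1)*(x+3)*(x+4)) * (b*c - a*d) :=
            mul_nonneg (by positivity) (by linarith)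
          have e6 : 0 ≤ ((x+1)*(x+2)*(x+3)*(x+4)) * (c^2 - b*d) :=
            mul_nonneg (by positivity) (by linarith)
          push_cast
          nlinarith [e1, e2, e3, e4, e5, e6]

theorem ls_unimodal (n : ℕ) (hn : 3 ≤ n) :
    ∃ m : ℕ, m ≤ n ∧
      (∀ j : ℕ, j + 1 ≤ m →
        (Nat.factorial (2 * j) : ℝ) * LS n j ≤
          (Nat.factorial (2 * (j + 1)) : ℝ) * LS n (j + 1)) ∧
      (∀ j : ℕ, m ≤ j → j + 1 ≤ n →
        (Nat.factorial (2 * (j + 1)) : ℝ) * LS n (j + 1) ≤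
          (Nat.factorial (2 * j) : ℝ) * LS n j) := by
  classical
  by_cases h : ∃ j, j + 1 ≤ n ∧ Bf n (j+1) < Bf n j
  · set m := Nat.find h with hm
    obtain ⟨hmn, hdesc⟩ := Nat.find_spec h
    have hB0 : Bf n 0 = 0 := by
      unfold Bf
      obtain ⟨p, rfl⟩ : ∃ p, n = p + 1 := ⟨n - 1, by omega⟩
      have : LS (p+1) 0 = 0 := by simp [LS]
      rw [this]; ring
    rw [← hm] at hdesc hmn
    have hm1 : 1 ≤ m := by
      by_contra hc
      have h0 : m = 0 := by omega
      rw [h0, hB0] at hdesc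
      exact absurd hdesc (not_lt.mpr (Bf_nonneg n 1))
    refine ⟨m, by omega, ?_, ?_⟩
    · intro j hj
      have hnot := Nat.find_min h (m := j) (show j < Nat.find h by omega)
      push_neg at hnot
      exact hnot (by omega)
    · have key : ∀ j, m ≤ j → j + 1 ≤ n → Bf n (j+1) ≤ Bf n j := by
        intro j hj
        induction j, hj using Nat.le_induction with
        | base => intro _; exact hdesc.le
        | succ j hj ih =>
            intro hjn
            have hprev : Bf n (j+1) ≤ Bf n j := ih (by omega)
            have hpj : 0 < Bf n j := Bf_pos n j (by omega) (by omega)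
            have hpj1 : 0 < Bf n (j+1) := Bf_pos n (j+1) (by omega) (by omega)
            have hlc := Bf_logconcave n j
            nlinarith [mul_le_mul_of_nonneg_right hprev hpj1.le]
      intro j hj hjn
      exact key j hj hjn
  · push_neg at h
    refine ⟨n, le_refl n, ?_, ?_⟩
    · intro j hj
      exact h j hj
    · intro j hj hjn
      omega
end

section
/- For all nonnegative integers n, r, every real w > 0, and every nonzero integer m, the Laplace integrals satisfy |I_{r,n}(w + 2πim)| ≤ (w/√(w² + 4π²m²))^{r+1} · I_{r,n}(w). -/
/-!
The coefficients of `(ξ + 1) ^ n + (ξ - 1) ^ n` are `(1 + (-1) ^ (n - k)) * choose n k ≥ 0`, and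
`∫₀^∞ e^{-ξz} ξ^s dξ = s! / z^(s+1)` for `Re z > 0` (integration by parts), so
`I_{r,n}(z) = ∑ c_k / z^(r+k+1)` with `c_k ≥ 0`. As `w = Re z ≤ |z|`, each term obeys
`|z|^{-(r+k+1)} = (w/|z|)^(r+k+1) w^{-(r+k+1)} ≤ (w/|z|)^(r+1) w^{-(r+k+1)}`, and summing the
real terms gives `(w/|z|)^(r+1) I_{r,n}(w)`.
-/

noncomputable def lapI (r n : ℕ) (z : ℂ) : ℂ :=
  ∫ ξ in Set.Ioi (0 : ℝ),
    Complex.exp (-(ξ : ℂ) * z) * (ξ : ℂ) ^ r * (((ξ : ℂ) + 1) ^ n + ((ξ : ℂ) - 1) ^ n)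

open MeasureTheory Set Filter Topology Complex

section Laplace

variable {z : ℂ}

lemma norm_cexp_neg_mul_mul_pow {ξ : ℝ} (hξ : 0 ≤ ξ) (s : ℕ) :
    ‖cexp (-(ξ : ℂ) * z) * (ξ : ℂ) ^ s‖ = Real.exp (-z.re * ξ) * ξ ^ s := by
  rw [norm_mul, norm_pow, norm_real, Real.norm_of_nonneg hξ, norm_exp]
  simp [mul_comm]

lemma integrableOn_cexp_neg_mul_mul_pow (hz : 0 < z.re) (s : ℕ) :
    IntegrableOn (fun ξ : ℝ => cexp (-(ξ : ℂ) * z) * (ξ : ℂ) ^ s) (Ioi 0) := by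
  have h := integrableOn_rpow_mul_exp_neg_mul_rpow (s := s)
    (by linarith [s.cast_nonneg (α := ℝ)]) one_pos hz
  refine (integrable_norm_iff (by fun_prop)).mp (h.congr_fun (fun ξ hξ => ?_) measurableSet_Ioi)
  dsimp only
  rw [norm_cexp_neg_mul_mul_pow (le_of_lt hξ), Real.rpow_one, Real.rpow_natCast, mul_comm]

lemma tendsto_cexp_neg_mul_mul_pow_atTop (hz : 0 < z.re) (s : ℕ) :
    Tendsto (fun ξ : ℝ => cexp (-(ξ : ℂ) * z) * (ξ : ℂ) ^ s) atTop (𝓝 0) := by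
  rw [tendsto_zero_iff_norm_tendsto_zero]
  refine (tendsto_rpow_mul_exp_neg_mul_atTop_nhds_zero s z.re hz).congr' ?_
  filter_upwards [eventually_ge_atTop 0] with ξ hξ
  rw [norm_cexp_neg_mul_mul_pow hξ, Real.rpow_natCast, mul_comm]

lemma hasDerivAt_cexp_neg_mul (ξ : ℝ) :
    HasDerivAt (fun t : ℝ => cexp (-(t : ℂ) * z)) (-z * cexp (-(ξ : ℂ) * z)) ξ := by
  have h : HasDerivAt (fun t : ℝ => -(t : ℂ) * z) (-z) ξ := by
    simpa using (ofRealCLM.hasDerivAt (x := ξ)).neg.mul_const z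
  simpa [mul_comm] using h.cexp

theorem integral_cexp_neg_mul_mul_pow (hz : 0 < z.re) (s : ℕ) :
    ∫ ξ in Ioi (0 : ℝ), cexp (-(ξ : ℂ) * z) * (ξ : ℂ) ^ s =
      s.factorial / z ^ (s + 1) := by
  have hz0 : z ≠ 0 := fun h => by simp [h] at hz
  induction s with
  | zero =>
    simpa [mul_comm, div_neg, neg_div] using integral_exp_mul_complex_Ioi (a := -z) (by simpa) 0
  | succ s ih =>
    set u : ℝ → ℂ := fun t => -cexp (-(t : ℂ) * z) / z
    set v : ℝ → ℂ := fun t => (t : ℂ) ^ (s + 1)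
    have hu (ξ : ℝ) : HasDerivAt u (cexp (-(ξ : ℂ) * z)) ξ := by
      have h := (hasDerivAt_cexp_neg_mul (z := z) ξ).neg.div_const z
      rwa [neg_mul, neg_neg, mul_div_cancel_left₀ _ hz0] at h
    have hv (ξ : ℝ) : HasDerivAt v ((s + 1) * (ξ : ℂ) ^ s) ξ := by
      simpa using (hasDerivAt_pow (s + 1) (ξ : ℂ)).comp_ofReal
    have huv (ξ : ℝ) : u ξ * ((s + 1) * (ξ : ℂ) ^ s)
        = -((s + 1) / z) * (cexp (-(ξ : ℂ) * z) * (ξ : ℂ) ^ s) := by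
      simp only [u]; ring
    have h_zero : Tendsto (u * v) (𝓝[>] 0) (𝓝 0) := by
      have : Continuous (u * v) := by simp only [u, v]; fun_prop
      simpa [v] using (this.tendsto 0).mono_left nhdsWithin_le_nhds
    have h_infty : Tendsto (u * v) atTop (𝓝 0) := by
      convert (tendsto_cexp_neg_mul_mul_pow_atTop hz (s + 1)).const_mul (-1 / z) using 1
      · ext t; simp only [Pi.mul_apply, u, v]; ring
      · simp
    have parts := integral_Ioi_mul_deriv_eq_deriv_mul (fun ξ _ => hu ξ) (fun ξ _ => hv ξ)
      (by
        rw [Pi.mul_def]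
        simp_rw [huv]
        exact (integrableOn_cexp_neg_mul_mul_pow hz s).const_mul _)
      (integrableOn_cexp_neg_mul_mul_pow hz (s + 1)) h_zero h_infty
    simp only [huv, integral_const_mul, ih, v] at parts
    rw [show ∫ ξ in Ioi (0 : ℝ), cexp (-(ξ : ℂ) * z) * (ξ : ℂ) ^ (s + 1)
        = (s + 1) / z * (s.factorial / z ^ (s + 1)) by linear_combination parts,
      Nat.factorial_succ]
    push_cast
    ring

end Laplace

def addSubPowCoeff (n k : ℕ) : ℝ := (1 + (-1) ^ (n - k)) * n.choose k

lemma addSubPowCoeff_nonneg (n k : ℕ) : 0 ≤ addSubPowCoeff n k := by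
  unfold addSubPowCoeff
  rcases neg_one_pow_eq_or ℝ (n - k) with h | h <;> rw [h] <;> positivity

lemma add_one_pow_add_sub_one_pow (n : ℕ) (x : ℂ) :
    (x + 1) ^ n + (x - 1) ^ n =
      ∑ k ∈ Finset.range (n + 1), (addSubPowCoeff n k : ℂ) * x ^ k := by
  rw [sub_eq_add_neg, add_pow, add_pow, ← Finset.sum_add_distrib]
  refine Finset.sum_congr rfl fun k _ => ?_
  simp only [addSubPowCoeff]
  push_cast
  ring

lemma lapI_eq_sum (r n : ℕ) {z : ℂ} (hz : 0 < z.re) :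
    lapI r n z = ∑ k ∈ Finset.range (n + 1),
      ((addSubPowCoeff n k * (r + k).factorial : ℝ) : ℂ) / z ^ (r + k + 1) := by
  have h_expand (ξ : ℝ) :
      cexp (-(ξ : ℂ) * z) * (ξ : ℂ) ^ r * (((ξ : ℂ) + 1) ^ n + ((ξ : ℂ) - 1) ^ n) =
        ∑ k ∈ Finset.range (n + 1),
          (addSubPowCoeff n k : ℂ) * (cexp (-(ξ : ℂ) * z) * (ξ : ℂ) ^ (r + k)) := by
    rw [add_one_pow_add_sub_one_pow, Finset.mul_sum]
    refine Finset.sum_congr rfl fun k _ => ?_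
    ring
  simp_rw [lapI, h_expand]
  rw [integral_finsetSum _ fun k _ => (integrableOn_cexp_neg_mul_mul_pow hz (r + k)).const_mul _]
  refine Finset.sum_congr rfl fun k _ => ?_
  rw [integral_const_mul, integral_cexp_neg_mul_mul_pow hz]
  push_cast
  ring

lemma norm_sum_div_pow_le {ι : Type*} (S : Finset ι) {a : ι → ℝ} (ha : ∀ i ∈ S, 0 ≤ a i)
    {d : ι → ℕ} {e : ℕ} (hd : ∀ i ∈ S, e ≤ d i) {z : ℂ} {w : ℝ} (hw : 0 < w) (hwz : w ≤ ‖z‖) :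
    ‖∑ i ∈ S, (a i : ℂ) / z ^ d i‖ ≤ (w / ‖z‖) ^ e * ∑ i ∈ S, a i / w ^ d i := by
  have hz : 0 < ‖z‖ := hw.trans_le hwz
  rw [Finset.mul_sum]
  refine (norm_sum_le _ _).trans (Finset.sum_le_sum fun i hi => ?_)
  have hratio : (w / ‖z‖) ^ d i ≤ (w / ‖z‖) ^ e :=
    pow_le_pow_of_le_one (by positivity) ((div_le_one hz).mpr hwz) (hd i hi)
  calc ‖(a i : ℂ) / z ^ d i‖ = (w / ‖z‖) ^ d i * (a i / w ^ d i) := by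
        rw [norm_div, norm_pow, norm_real, Real.norm_of_nonneg (ha i hi), div_pow]
        field_simp
    _ ≤ (w / ‖z‖) ^ e * (a i / w ^ d i) := by
        gcongr
        exact div_nonneg (ha i hi) (by positivity)

theorem lapI_bound_general (n r : ℕ) (w : ℝ) (hw : 0 < w) (m : ℤ) :
    ‖lapI r n ((w : ℂ) + 2 * Real.pi * (m : ℂ) * Complex.I)‖ ≤
      (w / Real.sqrt (w ^ 2 + 4 * Real.pi ^ 2 * (m : ℝ) ^ 2)) ^ (r + 1) *
        (lapI r n (w : ℂ)).re := by
  set z : ℂ := (w : ℂ) + 2 * Real.pi * (m : ℂ) * Complex.I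
  have hz_re : z.re = w := by simp [z]
  have hz_norm : ‖z‖ = Real.sqrt (w ^ 2 + 4 * Real.pi ^ 2 * (m : ℝ) ^ 2) := by
    rw [norm_def, normSq_apply, hz_re, show z.im = 2 * Real.pi * m by simp [z]]
    ring_nf
  have hw_le : w ≤ ‖z‖ := hz_re ▸ re_le_norm z
  have h_real : lapI r n (w : ℂ) = ((∑ k ∈ Finset.range (n + 1),
      addSubPowCoeff n k * (r + k).factorial / w ^ (r + k + 1) : ℝ) : ℂ) := by
    rw [lapI_eq_sum r n (by simpa using hw)]
    push_cast
    rfl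
  rw [← hz_norm, h_real, ofReal_re, lapI_eq_sum r n (hz_re ▸ hw)]
  exact norm_sum_div_pow_le _ (fun k _ => mul_nonneg (addSubPowCoeff_nonneg n k) (by positivity))
    (fun k _ => by omega) hw hw_le

theorem lapI_bound (n r : ℕ) (w : ℝ) (hw : 0 < w) (m : ℤ) (hm : m ≠ 0) :
    ‖lapI r n ((w : ℂ) + 2 * Real.pi * (m : ℂ) * Complex.I)‖ ≤
      (w / Real.sqrt (w ^ 2 + 4 * Real.pi ^ 2 * (m : ℝ) ^ 2)) ^ (r + 1) *
        (lapI r n (w : ℂ)).re :=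
  lapI_bound_general n r w hw m
end

section
/- For all nonnegative integers n, j, the sum Σ_{μ=0}^{n} C(n,μ) (1/(2j)!) Σ_{ν=0}^{2j} (-1)^ν C(2j,ν) (j-ν)^{n+μ} equals {n brace j}_1, i.e., the Legendre-Stirling number admits the double-sum representation (2j)! {n brace j}_1 = Σ_{μ=0}^{n} C(n,μ) Σ_{ν=0}^{2j} (-1)^ν C(2j,ν) (j-ν)^{n+μ}. -/
open Finset

section AlternatingBinomialSums

variable {R : Type*} [CommRing R]

theorem sum_range_choose_mul_pow_add (x : R) (n : ℕ) :
    ∑ μ ∈ range (n + 1), (n.choose μ : R) * x ^ (n + μ) = (x * (x + 1)) ^ n := by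
  rw [mul_pow, add_pow, mul_sum]
  refine sum_congr rfl fun μ _ => ?_
  rw [pow_add]
  ring

theorem alternating_sum_range_choose_eq_zero {N : ℕ} (hN : N ≠ 0) :
    ∑ ν ∈ range (N + 1), (-1 : R) ^ ν * N.choose ν = 0 := by
  have h := congrArg (Int.cast : ℤ → R) (Int.alternating_sum_range_choose_of_ne hN)
  push_cast at h
  exact h

theorem alternating_sum_range_choose_succ_mul_cast_mul (N : ℕ) (f : ℕ → R) :
    ∑ ν ∈ range (N + 2), (-1 : R) ^ ν * (N + 1).choose ν * (ν * f ν) =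
      -((N + 1) * ∑ k ∈ range (N + 1), (-1 : R) ^ k * N.choose k * f (k + 1)) := by
  rw [sum_range_succ', mul_sum, ← sum_neg_distrib]
  simp only [Nat.cast_zero, zero_mul, mul_zero, add_zero]
  refine sum_congr rfl fun k _ => ?_
  have h := congrArg (Nat.cast : ℕ → R) (Nat.add_one_mul_choose_eq N k)
  push_cast at h ⊢
  linear_combination ((-1 : R) ^ k * f (k + 1)) * h

theorem alternating_sum_range_choose_succ_mul_sub_mul (N : ℕ) (f : ℕ → R) :
    ∑ k ∈ range (N + 2), (-1 : R) ^ k * (N + 1).choose k * (((N : R) + 1 - k) * f k) =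
      (N + 1) * ∑ k ∈ range (N + 1), (-1 : R) ^ k * N.choose k * f k := by
  rw [sum_range_succ, mul_sum]
  simp only [Nat.cast_add, Nat.cast_one, sub_self, zero_mul, mul_zero, add_zero]
  refine sum_congr rfl fun k hk => ?_
  have hk : k ≤ N + 1 := by have := mem_range.mp hk; omega
  have h := congrArg (Nat.cast : ℕ → R) (Nat.choose_mul_succ_eq N k)
  push_cast [Nat.cast_sub hk] at h
  linear_combination (-(-1 : R) ^ k * f k) * h

theorem alternating_sum_range_choose_mul_eq_zero_of_odd {N : ℕ} (hN : Odd N) (f : ℕ → R)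
    (hf : ∀ k ≤ N, f (N - k) = f k) :
    ∑ k ∈ range (N + 1), (-1 : R) ^ k * N.choose k * f k = 0 := by
  have hsign : ∀ k ≤ N, (-1 : R) ^ (N - k) = -(-1) ^ k := fun k hk => by
    rcases Nat.even_or_odd k with hk_even | hk_odd
    · rw [(Nat.Odd.sub_even hk hN hk_even).neg_one_pow, hk_even.neg_one_pow]
    · rw [(Nat.Odd.sub_odd hN hk_odd).neg_one_pow, hk_odd.neg_one_pow, neg_neg]
  have hle : ∀ k ∈ range (N + 1), k ≤ N := fun k hk => Nat.lt_succ_iff.mp (mem_range.mp hk)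
  refine sum_involution (fun k _ => N - k) (fun k hk => ?_) (fun k _ _ => ?_)
    (fun k _ => mem_range.mpr (by omega)) (fun k hk => Nat.sub_sub_self (hle k hk))
  · rw [hf k (hle k hk), Nat.choose_symm (hle k hk), hsign k (hle k hk)]
    ring
  · obtain ⟨m, rfl⟩ := hN
    omega

end AlternatingBinomialSums

def legendreStirlingSum (R : Type*) [CommRing R] (n j : ℕ) : R :=
  ∑ ν ∈ range (2 * j + 1),
    (-1 : R) ^ ν * (2 * j).choose ν * (((j : R) - ν) * ((j : R) - ν + 1)) ^ n

namespace legendreStirlingSum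

variable (R : Type*) [CommRing R]

theorem zero_zero : legendreStirlingSum R 0 0 = 1 := by
  simp [legendreStirlingSum]

theorem zero_succ (j : ℕ) : legendreStirlingSum R 0 (j + 1) = 0 := by
  simpa [legendreStirlingSum] using
    alternating_sum_range_choose_eq_zero (R := R) (N := 2 * (j + 1)) (by omega)

theorem succ_zero (n : ℕ) : legendreStirlingSum R (n + 1) 0 = 0 := by
  simp [legendreStirlingSum]

theorem succ_succ (n m : ℕ) :
    legendreStirlingSum R (n + 1) (m + 1) =
      (2 * m + 2) * (2 * m + 1) * legendreStirlingSum R n m +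
        (m + 1) * (m + 2) * legendreStirlingSum R n (m + 1) := by
  set g : ℕ → R := fun k => (((m : R) - k) * ((m : R) - k + 1)) ^ n with hg
  have h_symm : ∀ k ≤ 2 * m + 1, g (2 * m + 1 - k) = g k := fun k hk => by
    simp only [hg, Nat.cast_sub hk]
    push_cast
    ring
  have h_lower_twice := alternating_sum_range_choose_succ_mul_sub_mul (2 * m) g
  have h_odd := alternating_sum_range_choose_mul_eq_zero_of_odd (odd_two_mul_add_one m) g h_symm
  have h_lower := alternating_sum_range_choose_succ_mul_cast_mul (2 * m + 1)
    (fun ν => -((2 * m + 3 - ν) * (((m + 1 : R) - ν) * ((m + 1 : R) - ν + 1)) ^ n))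
  have h_diff : legendreStirlingSum R (n + 1) (m + 1) -
        (m + 1) * (m + 2) * legendreStirlingSum R n (m + 1) =
      ∑ ν ∈ range (2 * m + 1 + 2), (-1 : R) ^ ν * (2 * m + 1 + 1).choose ν *
        (ν * -((2 * m + 3 - ν) * (((m + 1 : R) - ν) * ((m + 1 : R) - ν + 1)) ^ n)) := by
    rw [legendreStirlingSum, legendreStirlingSum, mul_sum, ← sum_sub_distrib,
      show 2 * (m + 1) = 2 * m + 1 + 1 by ring]
    refine sum_congr rfl fun ν _ => ?_
    push_cast
    ring
  have h_split : ∑ k ∈ range (2 * m + 1 + 1), (-1 : R) ^ k * (2 * m + 1).choose k *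
        -((2 * m + 3 - (k + 1 : ℕ)) *
          (((m + 1 : R) - (k + 1 : ℕ)) * ((m + 1 : R) - (k + 1 : ℕ) + 1)) ^ n) =
      -(∑ k ∈ range (2 * m + 2),
          (-1 : R) ^ k * (2 * m + 1).choose k * ((((2 * m : ℕ) : R) + 1 - k) * g k) +
        ∑ k ∈ range (2 * m + 1 + 1), (-1 : R) ^ k * (2 * m + 1).choose k * g k) := by
    rw [← sum_add_distrib, ← sum_neg_distrib]
    refine sum_congr rfl fun k _ => ?_
    simp only [hg]
    push_cast
    ring
  have h_eval : legendreStirlingSum R n m =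
      ∑ k ∈ range (2 * m + 1), (-1 : R) ^ k * (2 * m).choose k * g k := rfl
  push_cast at h_lower_twice h_lower h_split ⊢
  linear_combination h_diff + h_lower - (2 * m + 2 : R) * h_split +
    (2 * m + 2 : R) * (h_lower_twice + h_odd) - (2 * m + 2 : R) * (2 * m + 1) * h_eval

end legendreStirlingSum

theorem factorial_mul_LS_eq_legendreStirlingSum (n j : ℕ) :
    ((2 * j).factorial : ℝ) * LS n j = legendreStirlingSum ℝ n j := by
  induction n generalizing j with
  | zero =>
    cases j with
    | zero => simp [LS, legendreStirlingSum.zero_zero]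
    | succ j => simp [LS, legendreStirlingSum.zero_succ]
  | succ n ih =>
    cases j with
    | zero => simp [LS, legendreStirlingSum.succ_zero]
    | succ m =>
      rw [legendreStirlingSum.succ_succ, ← ih, ← ih, LS, show 2 * (m + 1) = 2 * m + 1 + 1 by ring,
        Nat.factorial_succ, Nat.factorial_succ]
      push_cast
      ring

theorem ls_double_sum (n j : ℕ) :
    (Nat.factorial (2 * j) : ℝ) * LS n j =
      ∑ μ ∈ Finset.range (n + 1), (Nat.choose n μ : ℝ) *
        ∑ ν ∈ Finset.range (2 * j + 1),
          (-1 : ℝ) ^ ν * (Nat.choose (2 * j) ν) * ((j : ℝ) - ν) ^ (n + μ) := by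
  rw [factorial_mul_LS_eq_legendreStirlingSum, legendreStirlingSum]
  simp_rw [mul_sum]
  rw [sum_comm]
  refine sum_congr rfl fun ν _ => ?_
  rw [← sum_range_choose_mul_pow_add, mul_sum]
  exact sum_congr rfl fun μ _ => by ring
end
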